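/- Positivity of persistence diagrams over totally ordered sets: let P = {p_0 < p_1 < ⋯ < p_n} be a finite totally ordered set and M : P → Vec a persistence module with free presentation φ : F ⇒ M. Define the birth-death function m_φ : P̄ → ℤ by m_φ(a,b) = dim(F(a) ∩ ker φ_b). Then the Möbius inversion ∂m_φ is nonnegative: ∂m_φ(I) ≥ 0 for all intervals I ∈ P̄. -/

import Mathlib

open CategoryTheory Finset
open scoped Classical

/-- The submodule of `k` which is everything if `a ≤ b` and zero otherwise. -/
noncomputable def upSub (k : Type) [Field k] {P : Type} [PartialOrder P] (a b : P) :
    Submodule k k :=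
  if a ≤ b then ⊤ else ⊥

lemma upSub_mono (k : Type) [Field k] {P : Type} [PartialOrder P] (a : P) {b c : P}
    (h : b ≤ c) : upSub k a b ≤ upSub k a c := by
  unfold upSub
  split_ifs with h1 h2
  · exact le_rfl
  · exact absurd (h1.trans h) h2
  · exact bot_le
  · exact bot_le

/-- The free persistence module `⨁_i k^{↑ pts i}` on a finite family of points. -/
noncomputable def freeMod (k : Type) [Field k] (P : Type) [PartialOrder P] {n : ℕ}
    (pts : Fin n → P) : P ⥤ ModuleCat k where
  obj b := ModuleCat.of k (∀ i, upSub k (pts i) b)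
  map {b c} h := ModuleCat.ofHom
    (LinearMap.pi fun i =>
      (Submodule.inclusion (upSub_mono k (pts i) (leOfHom h))).comp (LinearMap.proj i))
  map_id b := by ext x : 1; rfl
  map_comp f g := by ext x : 1; rfl

/-- The interval poset `P̄ = {(a,b) ∈ P × P | a ≤ b}` with the product order. -/
def Ibar (P : Type*) [PartialOrder P] := {p : P × P // p.1 ≤ p.2}

instance (P : Type*) [PartialOrder P] : PartialOrder (Ibar P) :=
  Subtype.partialOrder _

instance (P : Type*) [PartialOrder P] [DecidableRel ((· ≤ ·) : P → P → Prop)] :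
    DecidableRel ((· ≤ ·) : Ibar P → Ibar P → Prop) :=
  fun a b => inferInstanceAs (Decidable (a.val ≤ b.val))

instance (P : Type*) [PartialOrder P] [Fintype P]
    [DecidableRel ((· ≤ ·) : P → P → Prop)] : Fintype (Ibar P) :=
  Subtype.fintype _

/-!
Extend the birth–death sums to `x, y : WithBot P`: let `rectSum dm x y` be the sum of `dm` over
the rectangle `{(c, d) | c ≤ x, d ≤ y}`. Inclusion–exclusion over the rectangle gives
`dm (a, b) = m(a, b) - m(a⁻, b) - m(a, b⁻) + m(a⁻, b⁻)`, where `a⁻ : WithBot P` is the predecessor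
of `a` (or `⊥`) and `m = rectSum dm`.

Since the structure maps of `F` are injective, all these sums are dimensions inside `F(⊤)`:
`m(x, y) = dim (X_x ∩ Y_y)`, where `X_x` is the image of `F(x)` and `Y_y` the image of `ker φ_y`
(`bornBy` and `killedBy`), both increasing in their index. For `X' ≤ X` and `Y' ≤ Y`, the
subspaces `S = X ∩ Y'` and `T = X' ∩ Y` meet in `X' ∩ Y'` and span a subspace of `X ∩ Y`, so
`dim S + dim T = dim (S + T) + dim (S ∩ T)` yields
`dim (X ∩ Y') + dim (X' ∩ Y) ≤ dim (X ∩ Y) + dim (X' ∩ Y')`; for `X = X_a`, `X' = X_{a⁻}`,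
`Y = Y_b`, `Y' = Y_{b⁻}` this is `0 ≤ dm (a, b)`.
-/

theorem Submodule.finrank_inf_add_finrank_inf_le {K V : Type*} [DivisionRing K] [AddCommGroup V]
    [Module K V] [FiniteDimensional K V] {X X' Y Y' : Submodule K V} (hX : X' ≤ X)
    (hY : Y' ≤ Y) :
    Module.finrank K ↥(X ⊓ Y') + Module.finrank K ↥(X' ⊓ Y) ≤
      Module.finrank K ↥(X ⊓ Y) + Module.finrank K ↥(X' ⊓ Y') := by
  have hinf : X ⊓ Y' ⊓ (X' ⊓ Y) = X' ⊓ Y' := by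
    rw [inf_inf_inf_comm, inf_eq_right.2 hX, inf_eq_left.2 hY]
  have hsup : X ⊓ Y' ⊔ X' ⊓ Y ≤ X ⊓ Y := sup_le (inf_le_inf_left _ hY) (inf_le_inf_right _ hX)
  have hdim := Submodule.finrank_sup_add_finrank_inf_eq (X ⊓ Y') (X' ⊓ Y)
  rw [hinf] at hdim
  have := Submodule.finrank_mono hsup
  omega

section RectangleSums

variable {P : Type} [LinearOrder P] [Fintype P]

def predWithBot (a : P) : WithBot P := (univ.filter (· < a)).max

theorem coe_le_predWithBot {a c : P} : (c : WithBot P) ≤ predWithBot a ↔ c < a := by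
  rw [predWithBot, max_eq_sup_coe, Finset.le_sup_iff (WithBot.bot_lt_coe c)]
  simp only [mem_filter, mem_univ, true_and, WithBot.coe_le_coe]
  exact ⟨fun ⟨b, hb, hcb⟩ => hcb.trans_lt hb, fun hc => ⟨c, hc, le_rfl⟩⟩

theorem predWithBot_le (a : P) : predWithBot a ≤ a :=
  Finset.max_le fun _ hc => WithBot.coe_le_coe.2 (mem_filter.1 hc).2.le

def rectSum (dm : Ibar P → ℤ) (x y : WithBot P) : ℤ :=
  ∑ J ∈ univ.filter (fun J : Ibar P => (J.val.1 : WithBot P) ≤ x ∧ (J.val.2 : WithBot P) ≤ y),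
    dm J

variable (dm : Ibar P → ℤ)

@[simp]
theorem rectSum_bot_left (y : WithBot P) : rectSum dm ⊥ y = 0 := by
  simp [rectSum]

@[simp]
theorem rectSum_bot_right (x : WithBot P) : rectSum dm x ⊥ = 0 := by
  simp [rectSum]

theorem rectSum_val (I : Ibar P) :
    rectSum dm I.val.1 I.val.2 = ∑ J ∈ univ.filter (fun J => J ≤ I), dm J := by
  refine sum_congr (filter_congr fun J _ => ?_) fun _ _ => rfl
  rw [WithBot.coe_le_coe, WithBot.coe_le_coe]
  rfl

theorem rectSum_min_left (x y : WithBot P) : rectSum dm (min x y) y = rectSum dm x y := by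
  refine sum_congr (filter_congr fun J _ => ?_) fun _ _ => rfl
  rw [le_min_iff]
  exact ⟨fun h => ⟨h.1.1, h.2⟩, fun h => ⟨⟨h.1, (WithBot.coe_le_coe.2 J.prop).trans h.2⟩, h.2⟩⟩

theorem eq_rectSum_incl_excl {a b : P} (h : a ≤ b) :
    dm ⟨(a, b), h⟩ = rectSum dm a b - rectSum dm (predWithBot a) b - rectSum dm a (predWithBot b)
      + rectSum dm (predWithBot a) (predWithBot b) := by
  simp only [rectSum, sum_filter, ← sum_sub_distrib, ← sum_add_distrib]
  rw [sum_eq_single_of_mem _ (mem_univ ⟨(a, b), h⟩)]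
  · simp [coe_le_predWithBot]
  · rintro ⟨⟨c, d⟩, hcd⟩ - hne
    simp only [coe_le_predWithBot, WithBot.coe_le_coe]
    have : ¬ (c = a ∧ d = b) := fun ⟨hc, hd⟩ => hne (by subst hc hd; rfl)
    split_ifs <;> grind

end RectangleSums

section Functor

variable {C : Type*} [Category C] {R : Type} [Ring R]

theorem range_map_comp_hom (F : C ⥤ ModuleCat R) {a b c : C} (f : a ⟶ b) (g : b ⟶ c) :
    LinearMap.range (F.map (f ≫ g)).hom =
      (LinearMap.range (F.map f).hom).map (F.map g).hom := by
  rw [F.map_comp, ModuleCat.hom_comp, LinearMap.range_comp]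

theorem map_ker_app_le_ker_app {F G : C ⥤ ModuleCat R} (φ : F ⟶ G) {b c : C} (g : b ⟶ c) :
    (LinearMap.ker (φ.app b).hom).map (F.map g).hom ≤ LinearMap.ker (φ.app c).hom := by
  rintro _ ⟨x, hx, rfl⟩
  rw [SetLike.mem_coe, LinearMap.mem_ker] at hx
  rw [LinearMap.mem_ker, ← ModuleCat.comp_apply, φ.naturality, ModuleCat.comp_apply, hx, map_zero]

end Functor

section Filtrations

variable {R : Type} [Ring R] {P : Type} [LinearOrder P] [OrderTop P]

def bornBy (F : P ⥤ ModuleCat R) (x : WithBot P) : Submodule R (F.obj ⊤) :=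
  ⨆ (c : P) (_ : (c : WithBot P) ≤ x), LinearMap.range (F.map (homOfLE (le_top : c ≤ ⊤))).hom

def killedBy {F G : P ⥤ ModuleCat R} (φ : F ⟶ G) (y : WithBot P) : Submodule R (F.obj ⊤) :=
  ⨆ (c : P) (_ : (c : WithBot P) ≤ y),
    (LinearMap.ker (φ.app c).hom).map (F.map (homOfLE (le_top : c ≤ ⊤))).hom

variable (F : P ⥤ ModuleCat R)

theorem bornBy_mono : Monotone (bornBy F) :=
  fun _ _ h => by unfold bornBy; exact biSup_mono fun _ hc => hc.trans h

@[simp]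
theorem bornBy_bot : bornBy F ⊥ = ⊥ := by
  simp [bornBy]

theorem bornBy_coe (c : P) :
    bornBy F c = LinearMap.range (F.map (homOfLE (le_top : c ≤ ⊤))).hom := by
  unfold bornBy
  refine le_antisymm (iSup₂_le fun c' hc' => ?_) (le_iSup₂_of_le c le_rfl le_rfl)
  rw [← homOfLE_comp (WithBot.coe_le_coe.1 hc') le_top, range_map_comp_hom]
  exact LinearMap.map_le_range

variable {F} {G : P ⥤ ModuleCat R} (φ : F ⟶ G)

theorem killedBy_mono : Monotone (killedBy φ) :=
  fun _ _ h => by unfold killedBy; exact biSup_mono fun _ hc => hc.trans h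

@[simp]
theorem killedBy_bot : killedBy φ ⊥ = ⊥ := by
  simp [killedBy]

theorem killedBy_coe (c : P) :
    killedBy φ c = (LinearMap.ker (φ.app c).hom).map (F.map (homOfLE (le_top : c ≤ ⊤))).hom := by
  unfold killedBy
  refine le_antisymm (iSup₂_le fun c' hc' => ?_) (le_iSup₂_of_le c le_rfl le_rfl)
  rw [← homOfLE_comp (WithBot.coe_le_coe.1 hc') le_top, F.map_comp, ModuleCat.hom_comp,
    Submodule.map_comp]
  exact Submodule.map_mono (map_ker_app_le_ker_app φ _)

theorem killedBy_le_bornBy (y : WithBot P) : killedBy φ y ≤ bornBy F y :=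
  iSup₂_mono fun _ _ => LinearMap.map_le_range (f := (F.map _).hom)

theorem bornBy_min_inf_killedBy (x y : WithBot P) :
    bornBy F (min x y) ⊓ killedBy φ y = bornBy F x ⊓ killedBy φ y := by
  rcases le_total x y with h | h
  · rw [min_eq_left h]
  · rw [min_eq_right h, inf_eq_right.2 (killedBy_le_bornBy φ y),
      inf_eq_right.2 ((killedBy_le_bornBy φ y).trans (bornBy_mono _ h))]

end Filtrations

section FreeModule

variable (k : Type) [Field k] {P : Type} {n : ℕ} (pts : Fin n → P)

instance [PartialOrder P] (b : P) : FiniteDimensional k ((freeMod k P pts).obj b) :=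
  inferInstanceAs (FiniteDimensional k (∀ i, upSub k (pts i) b))

theorem freeMod_map_injective [PartialOrder P] {b c : P} (h : b ⟶ c) :
    Function.Injective ((freeMod k P pts).map h) :=
  fun _ _ hxy => funext fun i => Subtype.ext (congrArg Subtype.val (congrFun hxy i) :)

variable [LinearOrder P] [OrderTop P] {M : P ⥤ ModuleCat k} (φ : freeMod k P pts ⟶ M)

theorem finrank_bornBy_inf_killedBy {c d : P} (h : c ≤ d) :
    Module.finrank k ↥(bornBy (freeMod k P pts) c ⊓ killedBy φ d) =
      Module.finrank k ↥(LinearMap.range ((freeMod k P pts).map (homOfLE h)).hom ⊓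
        LinearMap.ker (φ.app d).hom) := by
  rw [bornBy_coe, killedBy_coe, ← homOfLE_comp h le_top, range_map_comp_hom,
    ← Submodule.map_inf _ (freeMod_map_injective k pts _)]
  exact (Submodule.equivMapOfInjective _ (freeMod_map_injective k pts _) _).finrank_eq.symm

theorem rectSum_eq_finrank [Fintype P] (dm : Ibar P → ℤ)
    (hdm : ∀ I : Ibar P,
      (Module.finrank k
        (LinearMap.range ((freeMod k P pts).map (homOfLE I.prop)).hom ⊓
          LinearMap.ker (φ.app I.val.2).hom : Submodule k _) : ℤ)
        = ∑ J ∈ univ.filter (fun J => J ≤ I), dm J)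
    (x y : WithBot P) :
    rectSum dm x y = Module.finrank k ↥(bornBy (freeMod k P pts) x ⊓ killedBy φ y) := by
  induction y using WithBot.recBotCoe with
  | bot => rw [rectSum_bot_right, killedBy_bot, inf_bot_eq, finrank_bot, Nat.cast_zero]
  | coe d =>
    induction x using WithBot.recBotCoe with
    | bot => rw [rectSum_bot_left, bornBy_bot, bot_inf_eq, finrank_bot, Nat.cast_zero]
    | coe c =>
      rw [← rectSum_min_left, ← bornBy_min_inf_killedBy, ← WithBot.coe_min,
        finrank_bornBy_inf_killedBy k pts φ (min_le_right c d)]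
      exact (rectSum_val dm ⟨(min c d, d), min_le_right c d⟩).trans (hdm _).symm

end FreeModule

theorem stmt_15_general {P : Type} [LinearOrder P] [Fintype P] (k : Type) [Field k] {n : ℕ}
    (pts : Fin n → P) (M : P ⥤ ModuleCat k) (φ : freeMod k P pts ⟶ M)
    (dm : Ibar P → ℤ)
    (hdm : ∀ I : Ibar P,
      (Module.finrank k
        (LinearMap.range ((freeMod k P pts).map (homOfLE I.prop)).hom ⊓
          LinearMap.ker (φ.app I.val.2).hom : Submodule k _) : ℤ)
        = ∑ J ∈ univ.filter (fun J => J ≤ I), dm J) :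
    ∀ I : Ibar P, 0 ≤ dm I := by
  rintro ⟨⟨a, b⟩, hab⟩
  have : Nonempty P := ⟨a⟩
  let : OrderTop P := Fintype.toOrderTop P
  have hquad := Submodule.finrank_inf_add_finrank_inf_le
    (bornBy_mono (freeMod k P pts) (predWithBot_le a)) (killedBy_mono φ (predWithBot_le b))
  rw [eq_rectSum_incl_excl dm hab]
  simp only [rectSum_eq_finrank k pts φ dm hdm]
  omega

/-- Positivity of persistence diagrams over finite totally ordered sets: for a
persistence module `M` over a finite linear order `P` with free presentation
`φ : F ⇒ M` (`F` free, each `φ_b` surjective), the Möbius inversion `∂m_φ` of the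
birth–death function `m_φ(a,b) = dim (F(a) ∩ ker φ_b)` (intersection taken inside
`F(b)`) is nonnegative. -/
theorem stmt_15 {P : Type} [LinearOrder P] [Fintype P] (k : Type) [Field k] {n : ℕ}
    (pts : Fin n → P) (M : P ⥤ ModuleCat k) (φ : freeMod k P pts ⟶ M)
    (hsurj : ∀ b : P, Function.Surjective (φ.app b))
    (dm : Ibar P → ℤ)
    (hdm : ∀ I : Ibar P,
      (Module.finrank k
        (LinearMap.range ((freeMod k P pts).map (homOfLE I.prop)).hom ⊓
          LinearMap.ker (φ.app I.val.2).hom : Submodule k _) : ℤ)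
        = ∑ J ∈ univ.filter (fun J => J ≤ I), dm J) :
    ∀ I : Ibar P, 0 ≤ dm I :=
  stmt_15_general k pts M φ dm hdm
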